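/- arXiv:2008.05136 — 3 statements merged into one kernel-verified Lean document; each statement's English description precedes it below -/
import Mathlib

section
/- Let X ⊆ ℝ^k be a nonempty compact set, let 0 < r < ∞, and let (μ_N)_{N≥1} and μ be Borel probability measures supported in X such that μ_N → μ weakly, i.e., ∫ f dμ_N → ∫ f dμ for every bounded continuous f : ℝ^k → ℝ. Then for every n ∈ ℕ, the n-th quantization error of order r satisfies e_{n,r}(μ_N) → e_{n,r}(μ) as N → ∞. -/
open MeasureTheory Filter

/-- The `n`-th quantization error of order `r`:
`e_{n,r}(μ) = inf { (∫ dist(x,γ)^r dμ)^{1/r} : γ ⊆ ℝ^k, 1 ≤ card γ ≤ n }`. -/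
noncomputable def quantErr {k : ℕ} (μ : Measure (EuclideanSpace ℝ (Fin k)))
    (r : ℝ) (n : ℕ) : ℝ :=
  sInf {e : ℝ | ∃ γ : Finset (EuclideanSpace ℝ (Fin k)),
    γ.Nonempty ∧ γ.card ≤ n ∧
    e = (∫ x, Metric.infDist x ↑γ ^ r ∂μ) ^ (1 / r)}

section Aux
open Metric

namespace QuantAux

lemma cont_abs_rpow (r : ℝ) (hr : 0 < r) : Continuous fun t : ℝ => |t| ^ r := by
  rw [continuous_iff_continuousAt]
  intro t
  exact (Real.continuousAt_rpow_const |t| r (Or.inr hr.le)).comp continuous_abs.continuousAt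

variable {k : ℕ}

lemma cont_trunc (s : Set (EuclideanSpace ℝ (Fin k))) {M : ℝ} (hM : 0 ≤ M) {r : ℝ} (hr : 0 < r) :
    Continuous fun x : EuclideanSpace ℝ (Fin k) => (min (Metric.infDist x s) M) ^ r := by
  have h : (fun x : EuclideanSpace ℝ (Fin k) => (min (Metric.infDist x s) M) ^ r)
      = fun x => |min (Metric.infDist x s) M| ^ r := by
    funext x; rw [abs_of_nonneg (le_min Metric.infDist_nonneg hM)]
  rw [h]
  exact (cont_abs_rpow r hr).comp ((Metric.continuous_infDist_pt s).min continuous_const)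

lemma trunc_nonneg (s : Set (EuclideanSpace ℝ (Fin k))) {M : ℝ} (hM : 0 ≤ M) (r : ℝ)
    (x : EuclideanSpace ℝ (Fin k)) : 0 ≤ (min (Metric.infDist x s) M) ^ r :=
  Real.rpow_nonneg (le_min Metric.infDist_nonneg hM) r

lemma trunc_le (s : Set (EuclideanSpace ℝ (Fin k))) {M : ℝ} (hM : 0 ≤ M) {r : ℝ} (hr : 0 < r)
    (x : EuclideanSpace ℝ (Fin k)) : (min (Metric.infDist x s) M) ^ r ≤ M ^ r :=
  Real.rpow_le_rpow (le_min Metric.infDist_nonneg hM) (min_le_right _ _) hr.le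

lemma integrable_trunc (ν : Measure (EuclideanSpace ℝ (Fin k))) [IsProbabilityMeasure ν]
    (s : Set (EuclideanSpace ℝ (Fin k))) {M : ℝ} (hM : 0 ≤ M) {r : ℝ} (hr : 0 < r) :
    Integrable (fun x => (min (Metric.infDist x s) M) ^ r) ν := by
  refine (integrable_const (M ^ r)).mono' ((cont_trunc s hM hr).aestronglyMeasurable) ?_
  refine Eventually.of_forall fun x => ?_
  rw [Real.norm_eq_abs, abs_of_nonneg (trunc_nonneg s hM r x)]
  exact trunc_le s hM hr x

/-- padding a finset into a tuple -/
lemma exists_tuple {n : ℕ} (hn : 0 < n) (γ : Finset (EuclideanSpace ℝ (Fin k)))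
    (hne : γ.Nonempty) (hcard : γ.card ≤ n) :
    ∃ v : Fin n → EuclideanSpace ℝ (Fin k), Set.range v = ↑γ := by
  obtain ⟨y0, hy0⟩ := hne
  set e := γ.equivFin with he
  refine ⟨fun i => if h : (i : ℕ) < γ.card then (e.symm ⟨i, h⟩ : _) else y0, ?_⟩
  apply Set.Subset.antisymm
  · rintro _ ⟨i, rfl⟩
    by_cases h : (i : ℕ) < γ.card
    · simp only [h, dif_pos]; exact (e.symm ⟨i, h⟩).2
    · simp only [h, dif_neg, not_false_iff]; exact hy0
  · rintro a ha
    refine ⟨⟨(e ⟨a, ha⟩ : ℕ), lt_of_lt_of_le (e ⟨a, ha⟩).2 hcard⟩, ?_⟩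
    have h : ((e ⟨a, ha⟩ : ℕ)) < γ.card := (e ⟨a, ha⟩).2
    simp only [h, dif_pos]
    have : e.symm ⟨(e ⟨a, ha⟩ : ℕ), h⟩ = (⟨a, ha⟩ : {x // x ∈ γ}) :=
      Equiv.symm_apply_apply e ⟨a, ha⟩
    rw [this]

/-- lipschitz-type bound for min with a constant -/
lemma abs_min_const_sub (a b M : ℝ) : |min a M - min b M| ≤ |a - b| := by
  rcases le_total a b with h | h
  · rw [abs_of_nonpos (by simp [min_le_min h le_rfl, sub_nonpos]), abs_of_nonpos (sub_nonpos.2 h)]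
    have : min b M ≤ min (a + (b - a)) (M + (b - a)) := by
      apply min_le_min (by linarith) (by linarith)
    rw [min_add_add_right] at this
    linarith
  · rw [abs_of_nonneg (by simp [min_le_min h le_rfl, sub_nonneg]), abs_of_nonneg (sub_nonneg.2 h)]
    have : min a M ≤ min (b + (a - b)) (M + (a - b)) := by
      apply min_le_min (by linarith) (by linarith)
    rw [min_add_add_right] at this
    linarith

/-- inf comparison, one side -/
lemma sInf_le_sInf_add {ι : Type*} {P : Set ι} (hP : P.Nonempty) {f g : ι → ℝ} {c : ℝ}
    (hf : ∀ v ∈ P, 0 ≤ f v) (h : ∀ v ∈ P, f v ≤ g v + c) :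
    sInf (f '' P) ≤ sInf (g '' P) + c := by
  have hbf : BddBelow (f '' P) := ⟨0, by rintro _ ⟨v, hv, rfl⟩; exact hf v hv⟩
  rw [← sub_le_iff_le_add]
  refine le_csInf (hP.image g) ?_
  rintro _ ⟨v, hv, rfl⟩
  have h1 := csInf_le hbf (Set.mem_image_of_mem f hv)
  have h2 := h v hv
  linarith

/-- inf comparison -/
lemma abs_sInf_sub_sInf_le {ι : Type*} {P : Set ι} (hP : P.Nonempty) {f g : ι → ℝ} {c : ℝ}
    (hf : ∀ v ∈ P, 0 ≤ f v) (hg : ∀ v ∈ P, 0 ≤ g v) (h : ∀ v ∈ P, |f v - g v| ≤ c) :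
    |sInf (f '' P) - sInf (g '' P)| ≤ c := by
  rw [abs_sub_le_iff]
  constructor
  · rw [sub_le_iff_le_add']
    exact sInf_le_sInf_add (g := g) (c := c) hP hf fun v hv => by
      have := h v hv; rw [abs_sub_le_iff] at this; linarith [this.1]
  · rw [sub_le_iff_le_add']
    exact sInf_le_sInf_add (g := f) (c := c) hP hg fun v hv => by
      have := h v hv; rw [abs_sub_le_iff] at this; linarith [this.2]

end QuantAux

end Aux

open MeasureTheory Filter Metric in
private lemma infDist_range_le' {k n : ℕ} (hn : 0 < n)
    (v w : Fin n → EuclideanSpace ℝ (Fin k)) (x : EuclideanSpace ℝ (Fin k)) (c : ℝ)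
    (hvw : dist v w ≤ c) :
    Metric.infDist x (Set.range v) ≤ Metric.infDist x (Set.range w) + c := by
  haveI : Nonempty (Fin n) := ⟨⟨0, hn⟩⟩
  obtain ⟨y, hy, hyd⟩ := ((Set.finite_range w).isCompact).exists_infDist_eq_dist
    (Set.range_nonempty w) x
  obtain ⟨i, rfl⟩ := hy
  have h1 := Metric.infDist_le_dist_of_mem (x := x) (Set.mem_range_self (f := v) i)
  have h2 := dist_le_pi_dist v w i
  have h3 := dist_triangle x (w i) (v i)
  rw [dist_comm (w i) (v i)] at h3
  rw [hyd]
  linarith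

/-- Continuity of the quantization error of order `r` with respect to weak convergence
of probability measures supported in a compact set. -/
theorem quantErr_continuous_of_weak_convergence
    {k : ℕ} (X : Set (EuclideanSpace ℝ (Fin k)))
    (hXne : X.Nonempty) (hXcomp : IsCompact X)
    (r : ℝ) (hr : 0 < r)
    (μseq : ℕ → Measure (EuclideanSpace ℝ (Fin k)))
    (μ : Measure (EuclideanSpace ℝ (Fin k)))
    [∀ N, IsProbabilityMeasure (μseq N)] [IsProbabilityMeasure μ]
    (hsupp : ∀ N, μseq N Xᶜ = 0) (hsupp' : μ Xᶜ = 0)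
    (hweak : ∀ f : EuclideanSpace ℝ (Fin k) → ℝ, Continuous f → (∃ C, ∀ x, |f x| ≤ C) →
      Tendsto (fun N => ∫ x, f x ∂(μseq N)) atTop (nhds (∫ x, f x ∂μ))) :
    ∀ n : ℕ, Tendsto (fun N => quantErr (μseq N) r n) atTop (nhds (quantErr μ r n)) := by
  classical
  intro n
  rcases Nat.eq_zero_or_pos n with hn0 | hn
  · subst hn0
    have h0 : ∀ ν : Measure (EuclideanSpace ℝ (Fin k)), quantErr ν r 0 = 0 := by
      intro ν
      have hset : {e : ℝ | ∃ γ : Finset (EuclideanSpace ℝ (Fin k)),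
          γ.Nonempty ∧ γ.card ≤ 0 ∧ e = (∫ x, Metric.infDist x ↑γ ^ r ∂ν) ^ (1 / r)} = ∅ := by
        ext e
        simp only [Set.mem_setOf_eq, Set.mem_empty_iff_false, iff_false, not_exists]
        rintro γ ⟨hne, hc, -⟩
        exact absurd (Finset.card_pos.2 hne) (by omega)
      have hq0 : quantErr ν r 0 = sInf {e : ℝ | ∃ γ : Finset (EuclideanSpace ℝ (Fin k)),
          γ.Nonempty ∧ γ.card ≤ 0 ∧ e = (∫ x, Metric.infDist x ↑γ ^ r ∂ν) ^ (1 / r)} := rfl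
      rw [hq0, hset, Real.sInf_empty]
    simp only [h0]
    exact tendsto_const_nhds
  obtain ⟨x0, hx0⟩ := hXne
  obtain ⟨D, hXD⟩ := hXcomp.isBounded.subset_closedBall x0
  have hD0 : 0 ≤ D := by
    have := hXD hx0
    rw [Metric.mem_closedBall, dist_self] at this; exact this
  set K : Set (EuclideanSpace ℝ (Fin k)) := Metric.closedBall x0 (2 * D) with hK
  set M : ℝ := 3 * D with hM
  have hM0 : 0 ≤ M := by rw [hM]; linarith
  have hx0K : x0 ∈ K := by
    rw [hK, Metric.mem_closedBall, dist_self]; linarith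
  have hdistXK : ∀ x ∈ X, ∀ y ∈ K, dist x y ≤ M := by
    intro x hx y hy
    have h1 : dist x x0 ≤ D := Metric.mem_closedBall.1 (hXD hx)
    have h2 : dist y x0 ≤ 2 * D := Metric.mem_closedBall.1 hy
    calc dist x y ≤ dist x x0 + dist x0 y := dist_triangle _ _ _
      _ = dist x x0 + dist y x0 := by rw [dist_comm x0 y]
      _ ≤ D + 2 * D := add_le_add h1 h2
      _ = M := by rw [hM]; ring
  set P : Set (Fin n → EuclideanSpace ℝ (Fin k)) := {v | ∀ i, v i ∈ K} with hP
  have hPne : P.Nonempty := ⟨fun _ => x0, fun _ => hx0K⟩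
  haveI hi0 : Nonempty (Fin n) := ⟨⟨0, hn⟩⟩
  set J : Measure (EuclideanSpace ℝ (Fin k)) → (Fin n → EuclideanSpace ℝ (Fin k)) → ℝ :=
    fun ν v => ∫ x, (min (Metric.infDist x (Set.range v)) M) ^ r ∂ν with hJ
  have hJnonneg : ∀ (ν : Measure (EuclideanSpace ℝ (Fin k))) v, 0 ≤ J ν v := fun ν v =>
    integral_nonneg fun x => QuantAux.trunc_nonneg _ hM0 r x
  set gfun : ℝ → ℝ := fun t => (max t 0) ^ (1 / r) with hg
  have gmono : Monotone gfun := fun a b hab =>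
    Real.rpow_le_rpow (le_max_right a 0) (max_le_max hab le_rfl) (by positivity)
  have gcont : Continuous gfun := by
    have h : gfun = fun t => |max t 0| ^ (1 / r) := by
      funext t; rw [hg]; rw [abs_of_nonneg (le_max_right t 0)]
    rw [h]
    exact (QuantAux.cont_abs_rpow (1 / r) (by positivity)).comp
      (continuous_id.max continuous_const)
  have hgval : ∀ t : ℝ, 0 ≤ t → gfun t = t ^ (1 / r) := by
    intro t ht; rw [hg]; simp only [max_eq_left ht]
  -- Step A
  have hA : ∀ ν : Measure (EuclideanSpace ℝ (Fin k)), ∀ _ : IsProbabilityMeasure ν, ν Xᶜ = 0 →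
      quantErr ν r n = gfun (sInf (J ν '' P)) := by
    intro ν hprob hν
    haveI := hprob
    have hae : ∀ᵐ x ∂ν, x ∈ X := by
      rw [ae_iff]
      exact hν
    have huntrunc : ∀ (s : Set (EuclideanSpace ℝ (Fin k))) (C : ℝ),
        (∀ x ∈ X, Metric.infDist x s ≤ C) →
        ∫ x, (min (Metric.infDist x s) C) ^ r ∂ν = ∫ x, Metric.infDist x s ^ r ∂ν := by
      intro s C hC
      refine integral_congr_ae ?_
      filter_upwards [hae] with x hx
      rw [min_eq_left (hC x hx)]
    have hint : ∀ (s : Set (EuclideanSpace ℝ (Fin k))) (C : ℝ), 0 ≤ C →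
        (∀ x ∈ X, Metric.infDist x s ≤ C) →
        Integrable (fun x => Metric.infDist x s ^ r) ν := by
      intro s C hC0 hC
      refine (QuantAux.integrable_trunc ν s hC0 hr).congr ?_
      filter_upwards [hae] with x hx
      rw [min_eq_left (hC x hx)]
    have hbK : ∀ s : Set (EuclideanSpace ℝ (Fin k)), s.Nonempty → s ⊆ K →
        ∀ x ∈ X, Metric.infDist x s ≤ M := by
      rintro s ⟨a, ha⟩ hsK x hx
      exact (Metric.infDist_le_dist_of_mem ha).trans (hdistXK x hx a (hsK ha))
    set SS : Set ℝ := {e : ℝ | ∃ γ : Finset (EuclideanSpace ℝ (Fin k)),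
      γ.Nonempty ∧ γ.card ≤ n ∧ e = (∫ x, Metric.infDist x ↑γ ^ r ∂ν) ^ (1 / r)} with hSSdef
    have hq : quantErr ν r n = sInf SS := rfl
    have hTne : (J ν '' P).Nonempty := hPne.image _
    have hTbdd : BddBelow (J ν '' P) := ⟨0, by rintro _ ⟨v, hv, rfl⟩; exact hJnonneg ν v⟩
    have hGbdd : BddBelow (gfun '' (J ν '' P)) :=
      ⟨0, by rintro _ ⟨t, ht, rfl⟩; exact Real.rpow_nonneg (le_max_right _ _) _⟩
    have himg : gfun '' (J ν '' P) ⊆ SS := by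
      rintro _ ⟨_, ⟨v, hvP, rfl⟩, rfl⟩
      have hrK : Set.range v ⊆ K := by rintro _ ⟨i, rfl⟩; exact hvP i
      refine ⟨Finset.image v Finset.univ, Finset.univ_nonempty.image v, ?_, ?_⟩
      · exact (Finset.card_image_le).trans (by simp)
      · have hcoe : (↑(Finset.image v Finset.univ) : Set (EuclideanSpace ℝ (Fin k)))
            = Set.range v := by
          rw [Finset.coe_image, Finset.coe_univ, Set.image_univ]
        have hval : J ν v = ∫ x, Metric.infDist x (Set.range v) ^ r ∂ν := by
          simp only [hJ]
          exact huntrunc (Set.range v) M (hbK _ (Set.range_nonempty v) hrK)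
        rw [hgval _ (hJnonneg ν v), hval, hcoe]
    have hSSbdd : BddBelow SS := by
      refine ⟨0, ?_⟩
      rintro _ ⟨γ, hne, hc, rfl⟩
      exact Real.rpow_nonneg
        (integral_nonneg fun x => Real.rpow_nonneg Metric.infDist_nonneg r) _
    have hSSne : SS.Nonempty := (hTne.image gfun).mono himg
    have h1 : sInf SS ≤ sInf (gfun '' (J ν '' P)) := csInf_le_csInf hSSbdd (hTne.image _) himg
    have h2 : sInf (gfun '' (J ν '' P)) ≤ sInf SS := by
      refine le_csInf hSSne ?_
      rintro _ ⟨γ, hγne, hγcard, rfl⟩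
      obtain ⟨a0, ha0⟩ := hγne
      have hCγ : ∀ x ∈ X, Metric.infDist x ↑γ ≤ D + dist a0 x0 := by
        intro x hx
        refine (Metric.infDist_le_dist_of_mem (Finset.mem_coe.2 ha0)).trans ?_
        have h1' : dist x x0 ≤ D := Metric.mem_closedBall.1 (hXD hx)
        have ht := dist_triangle x x0 a0
        rw [dist_comm x0 a0] at ht
        linarith
      have hintγ : Integrable (fun x => Metric.infDist x ↑γ ^ r) ν :=
        hint ↑γ (D + dist a0 x0) (by positivity) hCγ
      obtain ⟨γ', hne', hcard', hsub', hpt⟩ :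
          ∃ γ' : Finset (EuclideanSpace ℝ (Fin k)), γ'.Nonempty ∧ γ'.card ≤ n ∧
            (↑γ' : Set (EuclideanSpace ℝ (Fin k))) ⊆ K ∧
            ∀ x ∈ X, Metric.infDist x ↑γ' ≤ Metric.infDist x ↑γ := by
        by_cases hsub : ∀ a ∈ γ, a ∈ K
        · exact ⟨γ, ⟨a0, ha0⟩, hγcard, fun a ha => hsub a (Finset.mem_coe.1 ha),
            fun x _ => le_rfl⟩
        · push_neg at hsub
          obtain ⟨b, hbγ, hbK⟩ := hsub
          refine ⟨insert x0 (γ.filter (fun a => a ∈ K)), Finset.insert_nonempty _ _, ?_, ?_, ?_⟩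
          · have hlt : (γ.filter (fun a => a ∈ K)).card < γ.card :=
              Finset.card_lt_card ⟨Finset.filter_subset _ _,
                fun hsub2 => hbK (Finset.mem_filter.1 (hsub2 hbγ)).2⟩
            calc (insert x0 (γ.filter (fun a => a ∈ K))).card
                ≤ (γ.filter (fun a => a ∈ K)).card + 1 := Finset.card_insert_le _ _
              _ ≤ γ.card := hlt
              _ ≤ n := hγcard
          · intro a ha
            rw [Finset.coe_insert, Set.mem_insert_iff] at ha
            rcases ha with rfl | ha
            · exact hx0K
            · exact (Finset.mem_filter.1 (Finset.mem_coe.1 ha)).2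
          · intro x hx
            obtain ⟨a, haγ, hda⟩ := (γ.finite_toSet.isCompact).exists_infDist_eq_dist
              ⟨a0, Finset.mem_coe.2 ha0⟩ x
            rw [hda]
            by_cases haK : a ∈ K
            · refine Metric.infDist_le_dist_of_mem ?_
              rw [Finset.coe_insert, Set.mem_insert_iff]
              exact Or.inr (Finset.mem_coe.2 (Finset.mem_filter.2 ⟨Finset.mem_coe.1 haγ, haK⟩))
            · have h1' : dist x x0 ≤ D := Metric.mem_closedBall.1 (hXD hx)
              have h2' : 2 * D < dist a x0 := by
                by_contra h
                exact haK (Metric.mem_closedBall.2 (not_lt.1 h))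
              have h3' : dist x x0 ≤ dist x a := by
                have ht := dist_triangle a x x0
                rw [dist_comm a x] at ht
                linarith
              refine le_trans (Metric.infDist_le_dist_of_mem ?_) h3'
              rw [Finset.coe_insert, Set.mem_insert_iff]
              exact Or.inl rfl
      obtain ⟨v, hv⟩ := QuantAux.exists_tuple hn γ' hne' hcard'
      have hvP : v ∈ P := by
        intro i
        exact hsub' (hv ▸ Set.mem_range_self i)
      have hmem : gfun (J ν v) ∈ gfun '' (J ν '' P) :=
        Set.mem_image_of_mem _ (Set.mem_image_of_mem _ hvP)
      have hle : gfun (J ν v) ≤ (∫ x, Metric.infDist x ↑γ ^ r ∂ν) ^ (1 / r) := by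
        have e1 : J ν v = ∫ x, Metric.infDist x (↑γ' : Set (EuclideanSpace ℝ (Fin k))) ^ r ∂ν := by
          simp only [hJ, hv]
          exact huntrunc ↑γ' M (hbK ↑γ' (Finset.coe_nonempty.2 hne') hsub')
        have e2 : ∫ x, Metric.infDist x (↑γ' : Set (EuclideanSpace ℝ (Fin k))) ^ r ∂ν
            ≤ ∫ x, Metric.infDist x ↑γ ^ r ∂ν := by
          refine integral_mono_ae
            (hint ↑γ' M hM0 (hbK _ (Finset.coe_nonempty.2 hne') hsub')) hintγ ?_
          filter_upwards [hae] with x hx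
          exact Real.rpow_le_rpow Metric.infDist_nonneg (hpt x hx) hr.le
        rw [hgval _ (hJnonneg ν v), e1]
        exact Real.rpow_le_rpow
          (integral_nonneg fun x => Real.rpow_nonneg Metric.infDist_nonneg r) e2 (by positivity)
      exact (csInf_le hGbdd hmem).trans hle
    have h3 : sInf (gfun '' (J ν '' P)) = gfun (sInf (J ν '' P)) :=
      (Monotone.map_csInf_of_continuousAt gcont.continuousAt gmono hTne hTbdd).symm
    rw [hq, le_antisymm h1 h2, h3]
  -- Step B : uniform modulus
  have hmod : ∀ ε > (0:ℝ), ∃ δ > (0:ℝ), ∀ (ν : Measure (EuclideanSpace ℝ (Fin k)))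
      (_ : IsProbabilityMeasure ν) (v w : Fin n → EuclideanSpace ℝ (Fin k)),
      dist v w ≤ δ → |J ν v - J ν w| ≤ ε := by
    intro ε hε
    have huc := (isCompact_Icc (a := (0:ℝ)) (b := M)).uniformContinuousOn_of_continuous
      ((QuantAux.cont_abs_rpow r hr).continuousOn)
    rw [Metric.uniformContinuousOn_iff] at huc
    obtain ⟨δ, hδ, hδ'⟩ := huc ε hε
    refine ⟨δ / 2, by positivity, ?_⟩
    intro ν hprob v w hvw
    haveI := hprob
    have hpt : ∀ x, |(min (Metric.infDist x (Set.range v)) M) ^ r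
        - (min (Metric.infDist x (Set.range w)) M) ^ r| ≤ ε := by
      intro x
      have hinf : |Metric.infDist x (Set.range v) - Metric.infDist x (Set.range w)| ≤ δ / 2 := by
        rw [abs_sub_le_iff]
        constructor
        · have := infDist_range_le' hn v w x (δ / 2) hvw
          linarith
        · have := infDist_range_le' hn w v x (δ / 2) (by rwa [dist_comm])
          linarith
      have hmin := QuantAux.abs_min_const_sub (Metric.infDist x (Set.range v))
        (Metric.infDist x (Set.range w)) M
      have hm1 : min (Metric.infDist x (Set.range v)) M ∈ Set.Icc (0:ℝ) M :=
        ⟨le_min Metric.infDist_nonneg hM0, min_le_right _ _⟩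
      have hm2 : min (Metric.infDist x (Set.range w)) M ∈ Set.Icc (0:ℝ) M :=
        ⟨le_min Metric.infDist_nonneg hM0, min_le_right _ _⟩
      have hlt := hδ' _ hm1 _ hm2 (by rw [Real.dist_eq]; linarith)
      rw [Real.dist_eq, abs_of_nonneg (le_min Metric.infDist_nonneg hM0),
        abs_of_nonneg (le_min Metric.infDist_nonneg hM0)] at hlt
      exact hlt.le
    have hiv := QuantAux.integrable_trunc ν (Set.range v) hM0 hr
    have hiw := QuantAux.integrable_trunc ν (Set.range w) hM0 hr
    have hJd : J ν v - J ν w = ∫ x, ((min (Metric.infDist x (Set.range v)) M) ^ r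
        - (min (Metric.infDist x (Set.range w)) M) ^ r) ∂ν := by
      simp only [hJ]
      rw [integral_sub hiv hiw]
    rw [hJd, ← Real.norm_eq_abs]
    calc ‖∫ x, ((min (Metric.infDist x (Set.range v)) M) ^ r
        - (min (Metric.infDist x (Set.range w)) M) ^ r) ∂ν‖
        ≤ ε * (ν Set.univ).toReal := norm_integral_le_of_norm_le_const
          (Eventually.of_forall fun x => by rw [Real.norm_eq_abs]; exact hpt x)
      _ = ε := by simp
  -- Step C : pointwise convergence
  have hC : ∀ w : Fin n → EuclideanSpace ℝ (Fin k),
      Tendsto (fun N => J (μseq N) w) atTop (nhds (J μ w)) := by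
    intro w
    simp only [hJ]
    exact hweak _ (QuantAux.cont_trunc _ hM0 hr) ⟨M ^ r, fun x => by
      rw [abs_of_nonneg (QuantAux.trunc_nonneg _ hM0 r x)]
      exact QuantAux.trunc_le _ hM0 hr x⟩
  -- Step D
  have hPcomp : IsCompact P := by
    have hPeq : P = Set.pi Set.univ (fun _ : Fin n => K) := by
      ext v; simp [hP, Set.mem_pi]
    rw [hPeq, hK]
    exact isCompact_univ_pi fun _ => isCompact_closedBall x0 (2 * D)
  have hinf : Tendsto (fun N => sInf (J (μseq N) '' P)) atTop (nhds (sInf (J μ '' P))) := by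
    rw [Metric.tendsto_atTop]
    intro ε hε
    obtain ⟨δ, hδ, hmodδ⟩ := hmod (ε / 4) (by positivity)
    obtain ⟨F, hFP, hFfin, hFcov⟩ := hPcomp.elim_finite_subcover_image
      (fun w (_ : w ∈ P) => Metric.isOpen_ball (x := w) (ε := δ))
      (fun v hv => Set.mem_biUnion hv (Metric.mem_ball_self hδ))
    have hev : ∀ᶠ N in atTop, ∀ w ∈ F, |J (μseq N) w - J μ w| ≤ ε / 4 := by
      rw [eventually_all_finite hFfin]
      intro w hw
      obtain ⟨N0, hN0⟩ := Metric.tendsto_atTop.mp (hC w) (ε / 4) (by positivity)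
      exact eventually_atTop.2 ⟨N0, fun N hN => by
        have := hN0 N hN; rw [Real.dist_eq] at this; exact this.le⟩
    obtain ⟨N1, hN1⟩ := eventually_atTop.1 hev
    refine ⟨N1, fun N hN => ?_⟩
    have hper : ∀ v ∈ P, |J (μseq N) v - J μ v| ≤ 3 * (ε / 4) := by
      intro v hv
      obtain ⟨w, hwF, hw⟩ := Set.mem_iUnion₂.1 (hFcov hv)
      have hd : dist v w ≤ δ := (Metric.mem_ball.1 hw).le
      have e1 := hmodδ (μseq N) inferInstance v w hd
      have e2 := hN1 N hN w hwF
      have e3 := hmodδ μ inferInstance w v (by rwa [dist_comm])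
      have t1 := abs_sub_le (J (μseq N) v) (J (μseq N) w) (J μ v)
      have t2 := abs_sub_le (J (μseq N) w) (J μ w) (J μ v)
      have e3' : |J μ w - J μ v| ≤ ε / 4 := e3
      linarith
    rw [Real.dist_eq]
    have := QuantAux.abs_sInf_sub_sInf_le hPne (fun v _ => hJnonneg (μseq N) v)
      (fun v _ => hJnonneg μ v) hper
    linarith
  have heq : ∀ N, quantErr (μseq N) r n = gfun (sInf (J (μseq N) '' P)) := fun N =>
    hA _ inferInstance (hsupp N)
  rw [show quantErr μ r n = gfun (sInf (J μ '' P)) from hA μ inferInstance hsupp']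
  simp only [heq]
  exact ((gcont.tendsto _).comp hinf)
end

section
/- Let X ⊆ ℝ^k be a nonempty compact set. For each n ∈ ℕ let (S_{n,j})_{j≥1}, and also (S_j)_{j≥1}, be countably infinite families of contractive similarity maps with S_{n,j}(X) ⊆ X and S_j(X) ⊆ X, all similarity ratios lying in (0, s] for some s < 1. Let (p_{n,j})_{j≥1} and (p_j)_{j≥1} be probability vectors with all entries positive, and let μ_n and μ be Borel probability measures with μ_n(X) = μ(X) = 1 satisfying μ_n = Σ_{j≥1} p_{n,j} μ_n∘S_{n,j}^{-1} and μ = Σ_{j≥1} p_j μ∘S_j^{-1}. Assume Σ_{j≥1} sup_{x∈X} ‖S_{n,j}(x) − S_j(x)‖ → 0 and Σ_{j≥1} |p_{n,j} − p_j| → 0 as n → ∞. Then sup { |∫ f dμ_n − ∫ f dμ| : f : ℝ^k → ℝ is 1-Lipschitz } → 0 as n → ∞; in particular μ_n → μ weakly. -/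
open MeasureTheory Filter Topology

/-!
Let `D n` be the dual-Lipschitz distance between `μ n` and `ν`. For a 1-Lipschitz `f`, the
self-similarity equations give `∫ f dμₙ - ∫ f dν = ∑ pₙⱼ ∫ f ∘ Sₙⱼ dμₙ - ∑ qⱼ ∫ f ∘ Tⱼ dν`.
Compare the series term by term: `f ∘ Sₙⱼ` is `c`-Lipschitz, so replacing `μₙ` by `ν` costs at most
`c · D n`; replacing `Sₙⱼ` by `Tⱼ` costs at most `sup_X ‖Sₙⱼ - Tⱼ‖`; and as `∑ pₙⱼ = ∑ qⱼ = 1`,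
replacing the weights costs at most `diam X · ∑ |pₙⱼ - qⱼ|`. Hence `(1 - c) · D n` is bounded by
quantities tending to `0`. Weak convergence follows since bounded Lipschitz functions suffice to
test it (portmanteau).
-/

theorem hasSum_of_tsum_eq_of_ne_zero {ι α : Type*} [AddCommMonoid α] [TopologicalSpace α]
    {f : ι → α} {a : α} (h : ∑' j, f j = a) (ha : a ≠ 0) : HasSum f a := by
  by_cases hf : Summable f
  · exact h ▸ hf.hasSum
  · exact absurd ((tsum_eq_zero_of_not_summable hf).symm.trans h) ha.symm

theorem lipschitzWith_toNNReal_of_dist_eq_mul {α β : Type*} [PseudoMetricSpace α]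
    [PseudoMetricSpace β] {f : α → β} {r c : ℝ} (hf : ∀ x y, dist (f x) (f y) = r * dist x y)
    (hrc : r ≤ c) : LipschitzWith c.toNNReal f :=
  LipschitzWith.of_dist_le_mul fun x y =>
    (hf x y).le.trans (mul_le_mul_of_nonneg_right (hrc.trans c.le_coe_toNNReal) dist_nonneg)

theorem LipschitzWith.abs_sub_le_diam {α : Type*} [PseudoMetricSpace α] {X : Set α}
    {f : α → ℝ} (hf : LipschitzWith 1 f) (hX : Bornology.IsBounded X) {x y : α} (hx : x ∈ X)
    (hy : y ∈ X) :
    |f x - f y| ≤ Metric.diam X := by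
  rw [← Real.dist_eq]
  simpa using (hf.dist_le_mul x y).trans (by simpa using Metric.dist_le_diam_of_mem hX hx hy)

theorem le_ciSup_of_isCompact {α : Type*} [TopologicalSpace α] {X : Set α} (hX : IsCompact X)
    {g : α → ℝ} (hg : Continuous g) {x : α} (hx : x ∈ X) : g x ≤ ⨆ y : X, g y :=
  le_ciSup (f := fun y : X => g y) (by
    rw [← Set.image_eq_range]; exact hX.bddAbove_image hg.continuousOn) ⟨x, hx⟩

/-- Proof: `∑ wⱼ Aⱼ - ∑ vⱼ Bⱼ = ∑ wⱼ (Aⱼ - Bⱼ) + ∑ (wⱼ - vⱼ) (Bⱼ - m)` because `∑ wⱼ = ∑ vⱼ`. -/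
theorem abs_sub_le_of_hasSum_mul {ι : Type*} {w v A B e : ι → ℝ} {a b r m M : ℝ}
    (hw0 : ∀ j, 0 ≤ w j) (hw : HasSum w 1) (hv : HasSum v 1)
    (ha : HasSum (fun j => w j * A j) a) (hb : HasSum (fun j => v j * B j) b)
    (he0 : ∀ j, 0 ≤ e j) (he : Summable e) (hAB : ∀ j, |A j - B j| ≤ r + e j)
    (hB : ∀ j, |B j - m| ≤ M) :
    |a - b| ≤ r + ∑' j, e j + M * ∑' j, |w j - v j| := by
  have hw1 : ∀ j, w j ≤ 1 := fun j => le_hasSum hw j fun i _ => hw0 i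
  have hbound₁ : ∀ j, ‖w j * (A j - B j)‖ ≤ w j * r + e j := fun j => by
    rw [Real.norm_eq_abs, abs_mul, abs_of_nonneg (hw0 j)]
    nlinarith [hAB j, hw0 j, hw1 j, he0 j]
  have hbound₂ : ∀ j, ‖(w j - v j) * (B j - m)‖ ≤ |w j - v j| * M := fun j => by
    rw [Real.norm_eq_abs, abs_mul]
    exact mul_le_mul_of_nonneg_left (hB j) (abs_nonneg _)
  have hsum₁ : HasSum (fun j => w j * r + e j) (r + ∑' j, e j) := by
    simpa using (hw.mul_right r).add he.hasSum
  have hsum₂ : HasSum (fun j => |w j - v j| * M) ((∑' j, |w j - v j|) * M) :=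
    (hw.summable.sub hv.summable).abs.hasSum.mul_right M
  have hsplit : HasSum (fun j => w j * (A j - B j) + (w j - v j) * (B j - m)) (a - b) := by
    have h := (ha.sub hb).sub ((hw.sub hv).mul_right m)
    rw [sub_self, zero_mul, sub_zero] at h
    rwa [show (fun j => w j * (A j - B j) + (w j - v j) * (B j - m))
      = fun j => w j * A j - v j * B j - (w j - v j) * m from funext fun j => by ring]
  have hs₁ := Summable.of_norm_bounded hsum₁.summable hbound₁
  have hs₂ := Summable.of_norm_bounded hsum₂.summable hbound₂
  rw [hsplit.unique (hs₁.hasSum.add hs₂.hasSum)]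
  calc |∑' j, w j * (A j - B j) + ∑' j, (w j - v j) * (B j - m)|
      ≤ |∑' j, w j * (A j - B j)| + |∑' j, (w j - v j) * (B j - m)| := abs_add_le _ _
    _ ≤ (r + ∑' j, e j) + (∑' j, |w j - v j|) * M :=
      add_le_add (tsum_of_norm_bounded hsum₁ hbound₁) (tsum_of_norm_bounded hsum₂ hbound₂)
    _ = r + ∑' j, e j + M * ∑' j, |w j - v j| := by ring

/-- The Kantorovich–Rubinstein dual form of the Wasserstein-1 distance. It is meaningful only when
the set is bounded above (e.g. for probability measures concentrated on a compact set); otherwise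
`sSup` returns `0`. -/
noncomputable def kantorovichDist {α : Type*} [PseudoEMetricSpace α] [MeasurableSpace α]
    (μ ν : Measure α) : ℝ :=
  sSup {d : ℝ | ∃ f : α → ℝ, LipschitzWith 1 f ∧ d = |∫ x, f x ∂μ - ∫ x, f x ∂ν|}

section Compact

variable {α : Type*} [MetricSpace α] [MeasurableSpace α] [BorelSpace α] {X : Set α}
  {μ ν : Measure α}

theorem Continuous.integrable_of_ae_mem [IsFiniteMeasure μ] (hX : IsCompact X)
    (hμ : ∀ᵐ x ∂μ, x ∈ X) {f : α → ℝ} (hf : Continuous f) : Integrable f μ := by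
  have h := hf.continuousOn.integrableOn_compact (μ := μ) hX
  rwa [IntegrableOn, Measure.restrict_eq_self_of_ae_mem hμ] at h

theorem abs_integral_sub_integral_le [IsProbabilityMeasure μ] (hX : IsCompact X)
    (hμ : ∀ᵐ x ∂μ, x ∈ X) {f g : α → ℝ} (hf : Continuous f) (hg : Continuous g) {C : ℝ}
    (hfg : ∀ x ∈ X, |f x - g x| ≤ C) : |∫ x, f x ∂μ - ∫ x, g x ∂μ| ≤ C := by
  rw [← integral_sub (hf.integrable_of_ae_mem hX hμ) (hg.integrable_of_ae_mem hX hμ)]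
  simpa using norm_integral_le_of_norm_le_const (f := fun x => f x - g x)
    (hμ.mono fun x hx => hfg x hx)

theorem abs_integral_sub_le [IsProbabilityMeasure μ] (hX : IsCompact X)
    (hμ : ∀ᵐ x ∂μ, x ∈ X) {f : α → ℝ} (hf : Continuous f) {a C : ℝ}
    (hfa : ∀ x ∈ X, |f x - a| ≤ C) : |∫ x, f x ∂μ - a| ≤ C := by
  simpa using abs_integral_sub_integral_le hX hμ hf continuous_const hfa

theorem hasSum_integral_of_eq_sum_map {ι : Type*} {R : ι → α → α} (hR : ∀ j, Continuous (R j))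
    {w : ι → ℝ} (hw : ∀ j, 0 ≤ w j)
    (hμR : μ = Measure.sum fun j => ENNReal.ofReal (w j) • μ.map (R j))
    {f : α → ℝ} (hf : Continuous f) (hfi : Integrable f μ) :
    HasSum (fun j => w j * ∫ x, f (R j x) ∂μ) (∫ x, f x ∂μ) := by
  rw [hμR] at hfi
  have h := hasSum_integral_measure hfi
  rw [← hμR] at h
  have hmap : ∀ j, ∫ x, f x ∂μ.map (R j) = ∫ x, f (R j x) ∂μ := fun j =>
    integral_map (hR j).aemeasurable hf.aestronglyMeasurable
  simpa only [integral_smul_measure, hmap, fun j => ENNReal.toReal_ofReal (hw j), smul_eq_mul]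
    using h

variable [IsProbabilityMeasure μ] [IsProbabilityMeasure ν]

theorem bddAbove_abs_integral_sub_of_lipschitzWith (hX : IsCompact X) (hμ : ∀ᵐ x ∂μ, x ∈ X)
    (hν : ∀ᵐ x ∂ν, x ∈ X) :
    BddAbove {d : ℝ | ∃ f : α → ℝ, LipschitzWith 1 f ∧ d = |∫ x, f x ∂μ - ∫ x, f x ∂ν|} := by
  obtain ⟨x₀, hx₀⟩ := hμ.exists
  refine ⟨2 * Metric.diam X, ?_⟩
  rintro d ⟨f, hf, rfl⟩
  have h₁ := abs_integral_sub_le hX hμ hf.continuous fun x hx =>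
    hf.abs_sub_le_diam hX.isBounded hx hx₀
  have h₂ := abs_integral_sub_le hX hν hf.continuous fun x hx =>
    hf.abs_sub_le_diam hX.isBounded hx hx₀
  calc |∫ x, f x ∂μ - ∫ x, f x ∂ν| ≤ |∫ x, f x ∂μ - f x₀| + |f x₀ - ∫ x, f x ∂ν| :=
        abs_sub_le _ _ _
    _ ≤ 2 * Metric.diam X := by rw [abs_sub_comm (f x₀)]; linarith

theorem kantorovichDist_nonneg (hX : IsCompact X) (hμ : ∀ᵐ x ∂μ, x ∈ X)
    (hν : ∀ᵐ x ∂ν, x ∈ X) : 0 ≤ kantorovichDist μ ν :=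
  le_csSup (bddAbove_abs_integral_sub_of_lipschitzWith hX hμ hν)
    ⟨0, LipschitzWith.const' 0, by simp⟩

theorem abs_integral_sub_le_mul_kantorovichDist (hX : IsCompact X) (hμ : ∀ᵐ x ∂μ, x ∈ X)
    (hν : ∀ᵐ x ∂ν, x ∈ X) {K : NNReal} {f : α → ℝ} (hf : LipschitzWith K f) :
    |∫ x, f x ∂μ - ∫ x, f x ∂ν| ≤ K * kantorovichDist μ ν := by
  rcases eq_or_ne K 0 with rfl | hK
  · obtain ⟨x₀⟩ := nonempty_of_isProbabilityMeasure μ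
    have hconst : f = fun _ => f x₀ := funext fun x => by
      simpa using hf.dist_le_mul x x₀
    rw [hconst]
    simp
  have hK₀ : (0 : ℝ) < K := by positivity
  have hscaled : LipschitzWith 1 fun x => (K : ℝ)⁻¹ * f x :=
    LipschitzWith.of_dist_le_mul fun x y => by
      rw [Real.dist_eq, ← mul_sub, abs_mul, abs_inv, NNReal.abs_eq, NNReal.coe_one, one_mul,
        inv_mul_le_iff₀ hK₀, ← Real.dist_eq]
      exact hf.dist_le_mul x y
  have h := le_csSup (bddAbove_abs_integral_sub_of_lipschitzWith hX hμ hν) ⟨_, hscaled, rfl⟩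
  rwa [integral_const_mul, integral_const_mul, ← mul_sub, abs_mul, abs_inv, NNReal.abs_eq,
    inv_mul_le_iff₀ hK₀] at h

theorem kantorovichDist_le_of_eq_sum_map {ι : Type*} (hX : IsCompact X)
    (hμ : ∀ᵐ x ∂μ, x ∈ X) (hν : ∀ᵐ x ∂ν, x ∈ X) {S T : ι → α → α} {K : NNReal}
    (hS : ∀ j, LipschitzWith K (S j)) (hT : ∀ j, Continuous (T j))
    (hTX : ∀ j, Set.MapsTo (T j) X X) {w v : ι → ℝ} (hw₀ : ∀ j, 0 ≤ w j) (hv₀ : ∀ j, 0 ≤ v j)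
    (hw : HasSum w 1) (hv : HasSum v 1)
    (hμS : μ = Measure.sum fun j => ENNReal.ofReal (w j) • μ.map (S j))
    (hνT : ν = Measure.sum fun j => ENNReal.ofReal (v j) • ν.map (T j))
    {e : ι → ℝ} (he : Summable e) (hSTe : ∀ j, ∀ x ∈ X, dist (S j x) (T j x) ≤ e j) :
    kantorovichDist μ ν ≤
      K * kantorovichDist μ ν + ∑' j, e j + Metric.diam X * ∑' j, |w j - v j| := by
  obtain ⟨x₀, hx₀⟩ := hν.exists
  refine csSup_le ⟨0, 0, LipschitzWith.const' 0, by simp⟩ ?_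
  rintro d ⟨f, hf, rfl⟩
  have hfS : ∀ j, Continuous fun x => f (S j x) := fun j => hf.continuous.comp (hS j).continuous
  have hfT : ∀ j, Continuous fun x => f (T j x) := fun j => hf.continuous.comp (hT j)
  refine abs_sub_le_of_hasSum_mul hw₀ hw hv
    (hasSum_integral_of_eq_sum_map (fun j => (hS j).continuous) hw₀ hμS hf.continuous
      (hf.continuous.integrable_of_ae_mem hX hμ))
    (hasSum_integral_of_eq_sum_map hT hv₀ hνT hf.continuous
      (hf.continuous.integrable_of_ae_mem hX hν))
    (fun j => dist_nonneg.trans (hSTe j x₀ hx₀)) he (fun j => ?_) (m := f x₀) fun j =>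
      abs_integral_sub_le hX hν (hfT j) fun x hx =>
        hf.abs_sub_le_diam hX.isBounded (hTX j hx) hx₀
  have hmove : |∫ x, f (S j x) ∂μ - ∫ x, f (S j x) ∂ν| ≤ K * kantorovichDist μ ν := by
    simpa using abs_integral_sub_le_mul_kantorovichDist hX hμ hν (hf.comp (hS j))
  have hclose : |∫ x, f (S j x) ∂ν - ∫ x, f (T j x) ∂ν| ≤ e j :=
    abs_integral_sub_integral_le hX hν (hfS j) (hfT j) fun x hx => by
      simpa [Real.dist_eq] using (hf.dist_le_mul _ _).trans (by simpa using hSTe j x hx)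
  calc |∫ x, f (S j x) ∂μ - ∫ x, f (T j x) ∂ν|
      ≤ |∫ x, f (S j x) ∂μ - ∫ x, f (S j x) ∂ν| + |∫ x, f (S j x) ∂ν - ∫ x, f (T j x) ∂ν| :=
        abs_sub_le _ _ _
    _ ≤ K * kantorovichDist μ ν + e j := add_le_add hmove hclose

theorem tendsto_integral_of_tendsto_kantorovichDist {ι : Type*} {l : Filter ι}
    [l.IsCountablyGenerated] {μs : ι → Measure α} [∀ i, IsProbabilityMeasure (μs i)]
    (hX : IsCompact X) (hμs : ∀ i, ∀ᵐ x ∂μs i, x ∈ X) (hν : ∀ᵐ x ∂ν, x ∈ X)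
    (hD : Tendsto (fun i => kantorovichDist (μs i) ν) l (𝓝 0)) {f : α → ℝ} (hf : Continuous f)
    (hfb : ∃ C, ∀ x, |f x| ≤ C) :
    Tendsto (fun i => ∫ x, f x ∂μs i) l (𝓝 (∫ x, f x ∂ν)) := by
  let P : ι → ProbabilityMeasure α := fun i => ⟨μs i, inferInstance⟩
  have hP : Tendsto P l (𝓝 ⟨ν, inferInstance⟩) := by
    refine tendsto_iff_forall_lipschitz_integral_tendsto.2 fun g _ ⟨K, hg⟩ => ?_
    refine tendsto_iff_norm_sub_tendsto_zero.2 (squeeze_zero (fun _ => norm_nonneg _)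
      (fun i => abs_integral_sub_le_mul_kantorovichDist hX (hμs i) hν hg) ?_)
    simpa using hD.const_mul (K : ℝ)
  obtain ⟨C, hC⟩ := hfb
  exact ProbabilityMeasure.tendsto_iff_forall_integral_tendsto.1 hP
    (BoundedContinuousFunction.ofNormedAddCommGroup f hf C hC)

end Compact

theorem self_similar_measures_stability_general
    {k : ℕ} (X : Set (EuclideanSpace ℝ (Fin k)))
    (hXcomp : IsCompact X)
    (S : ℕ → ℕ → EuclideanSpace ℝ (Fin k) → EuclideanSpace ℝ (Fin k))
    (T : ℕ → EuclideanSpace ℝ (Fin k) → EuclideanSpace ℝ (Fin k))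
    (s : ℕ → ℕ → ℝ) (t : ℕ → ℝ) (c : ℝ) (hc : c < 1)
    (hSsim : ∀ n j x y, dist (S n j x) (S n j y) = s n j * dist x y)
    (hTsim : ∀ j x y, dist (T j x) (T j y) = t j * dist x y)
    (hsrange : ∀ n j, 0 < s n j ∧ s n j ≤ c)
    (htrange : ∀ j, 0 < t j ∧ t j ≤ c)
    (hTmaps : ∀ j, T j '' X ⊆ X)
    (p : ℕ → ℕ → ℝ) (q : ℕ → ℝ)
    (hp : ∀ n j, 0 < p n j) (hq : ∀ j, 0 < q j)
    (hpsum : ∀ n, ∑' j, p n j = 1) (hqsum : ∑' j, q j = 1)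
    (μ : ℕ → Measure (EuclideanSpace ℝ (Fin k)))
    (ν : Measure (EuclideanSpace ℝ (Fin k)))
    [∀ n, IsProbabilityMeasure (μ n)] [IsProbabilityMeasure ν]
    (hμX : ∀ n, μ n X = 1) (hνX : ν X = 1)
    (hμself : ∀ n, μ n = Measure.sum (fun j : ℕ => ENNReal.ofReal (p n j) • (μ n).map (S n j)))
    (hνself : ν = Measure.sum (fun j : ℕ => ENNReal.ofReal (q j) • ν.map (T j)))
    (hSsummable : ∀ n, Summable (fun j => ⨆ x : X, ‖S n j x - T j x‖))
    (hSconv : Tendsto (fun n => ∑' j, ⨆ x : X, ‖S n j x - T j x‖) atTop (nhds 0))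
    (hpconv : Tendsto (fun n => ∑' j, |p n j - q j|) atTop (nhds 0)) :
    Tendsto (fun n => sSup {d : ℝ | ∃ f : EuclideanSpace ℝ (Fin k) → ℝ,
        LipschitzWith 1 f ∧ d = |∫ x, f x ∂(μ n) - ∫ x, f x ∂ν|}) atTop (nhds 0) ∧
    ∀ f : EuclideanSpace ℝ (Fin k) → ℝ, Continuous f → (∃ C, ∀ x, |f x| ≤ C) →
      Tendsto (fun n => ∫ x, f x ∂(μ n)) atTop (nhds (∫ x, f x ∂ν)) := by
  have hμX' : ∀ n, ∀ᵐ x ∂μ n, x ∈ X := fun n =>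
    mem_ae_iff.2 ((prob_compl_eq_zero_iff hXcomp.measurableSet).2 (hμX n))
  have hνX' : ∀ᵐ x ∂ν, x ∈ X := mem_ae_iff.2 ((prob_compl_eq_zero_iff hXcomp.measurableSet).2 hνX)
  set K := c.toNNReal
  have hK : (K : ℝ) < 1 := NNReal.coe_lt_one.2 (Real.toNNReal_lt_one.2 hc)
  have hS n j : LipschitzWith K (S n j) :=
    lipschitzWith_toNNReal_of_dist_eq_mul (hSsim n j) (hsrange n j).2
  have hT j : LipschitzWith K (T j) :=
    lipschitzWith_toNNReal_of_dist_eq_mul (hTsim j) (htrange j).2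
  have hD : Tendsto (fun n => kantorovichDist (μ n) ν) atTop (𝓝 0) := by
    refine squeeze_zero (fun n => kantorovichDist_nonneg hXcomp (hμX' n) hνX') (fun n => ?_)
      (by simpa using (hSconv.add (hpconv.const_mul (Metric.diam X))).div_const (1 - K))
    have h := kantorovichDist_le_of_eq_sum_map hXcomp (hμX' n) hνX' (hS n)
      (fun j => (hT j).continuous) (fun j => Set.mapsTo_iff_image_subset.2 (hTmaps j))
      (fun j => (hp n j).le) (fun j => (hq j).le)
      (hasSum_of_tsum_eq_of_ne_zero (hpsum n) one_ne_zero)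
      (hasSum_of_tsum_eq_of_ne_zero hqsum one_ne_zero) (hμself n) hνself (hSsummable n)
      fun j x hx => (dist_eq_norm _ _).trans_le <| le_ciSup_of_isCompact hXcomp
        (g := fun x => ‖S n j x - T j x‖) ((hS n j).continuous.sub (hT j).continuous).norm hx
    rw [le_div_iff₀ (by linarith)]
    linarith
  exact ⟨hD, fun f hf hfb => tendsto_integral_of_tendsto_kantorovichDist hXcomp hμX' hνX' hD hf hfb⟩

/-- Stability of infinite self-similar measures: if the maps and the probability vectors
converge (summably), the associated self-similar measures converge in the Kantorovich
(dual Lipschitz) metric, and in particular weakly. -/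
theorem self_similar_measures_stability
    {k : ℕ} (X : Set (EuclideanSpace ℝ (Fin k)))
    (hXne : X.Nonempty) (hXcomp : IsCompact X)
    (S : ℕ → ℕ → EuclideanSpace ℝ (Fin k) → EuclideanSpace ℝ (Fin k))
    (T : ℕ → EuclideanSpace ℝ (Fin k) → EuclideanSpace ℝ (Fin k))
    (s : ℕ → ℕ → ℝ) (t : ℕ → ℝ) (c : ℝ) (hc : c < 1)
    (hSsim : ∀ n j x y, dist (S n j x) (S n j y) = s n j * dist x y)
    (hTsim : ∀ j x y, dist (T j x) (T j y) = t j * dist x y)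
    (hsrange : ∀ n j, 0 < s n j ∧ s n j ≤ c)
    (htrange : ∀ j, 0 < t j ∧ t j ≤ c)
    (hSmaps : ∀ n j, S n j '' X ⊆ X) (hTmaps : ∀ j, T j '' X ⊆ X)
    (p : ℕ → ℕ → ℝ) (q : ℕ → ℝ)
    (hp : ∀ n j, 0 < p n j) (hq : ∀ j, 0 < q j)
    (hpsum : ∀ n, ∑' j, p n j = 1) (hqsum : ∑' j, q j = 1)
    (μ : ℕ → Measure (EuclideanSpace ℝ (Fin k)))
    (ν : Measure (EuclideanSpace ℝ (Fin k)))
    [∀ n, IsProbabilityMeasure (μ n)] [IsProbabilityMeasure ν]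
    (hμX : ∀ n, μ n X = 1) (hνX : ν X = 1)
    (hμself : ∀ n, μ n = Measure.sum (fun j : ℕ => ENNReal.ofReal (p n j) • (μ n).map (S n j)))
    (hνself : ν = Measure.sum (fun j : ℕ => ENNReal.ofReal (q j) • ν.map (T j)))
    (hSsummable : ∀ n, Summable (fun j => ⨆ x : X, ‖S n j x - T j x‖))
    (hSconv : Tendsto (fun n => ∑' j, ⨆ x : X, ‖S n j x - T j x‖) atTop (nhds 0))
    (hpconv : Tendsto (fun n => ∑' j, |p n j - q j|) atTop (nhds 0)) :
    Tendsto (fun n => sSup {d : ℝ | ∃ f : EuclideanSpace ℝ (Fin k) → ℝ,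
        LipschitzWith 1 f ∧ d = |∫ x, f x ∂(μ n) - ∫ x, f x ∂ν|}) atTop (nhds 0) ∧
    ∀ f : EuclideanSpace ℝ (Fin k) → ℝ, Continuous f → (∃ C, ∀ x, |f x| ≤ C) →
      Tendsto (fun n => ∫ x, f x ∂(μ n)) atTop (nhds (∫ x, f x ∂ν)) :=
  self_similar_measures_stability_general X hXcomp S T s t c hc hSsim hTsim hsrange htrange hTmaps p
    q hp hq hpsum hqsum μ ν hμX hνX hμself hνself hSsummable hSconv hpconv
end

section
/- Let μ be the Lebesgue measure restricted to the interval [0,1] ⊆ ℝ. Then the lower and upper quantization dimensions of order zero of μ coincide and the quantization dimension with respect to the geometric mean error satisfies D(μ) = 1. -/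
open MeasureTheory Filter

/-- The `n`-th geometric quantization error exponent for a measure on `ℝ`:
`ê_n(μ) = inf { ∫ log(dist(x,γ)) dμ : γ ⊆ ℝ, 1 ≤ card γ ≤ n }`. -/
noncomputable def geomQuantErrExp (μ : Measure ℝ) (n : ℕ) : ℝ :=
  sInf {e : ℝ | ∃ γ : Finset ℝ,
    γ.Nonempty ∧ γ.card ≤ n ∧ e = ∫ x, Real.log (Metric.infDist x ↑γ) ∂μ}

/-- Lower quantization dimension of order zero. -/
noncomputable def lowerQDim (μ : Measure ℝ) : ℝ :=
  liminf (fun n : ℕ => Real.log n / (- geomQuantErrExp μ n)) atTop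

/-- Upper quantization dimension of order zero. -/
noncomputable def upperQDim (μ : Measure ℝ) : ℝ :=
  limsup (fun n : ℕ => Real.log n / (- geomQuantErrExp μ n)) atTop

/-!
The geometric mean error of `n` points is controlled by the distribution of `x ↦ dist(x, γ)`.
A set `γ` of `n` points is within distance `r` of a set of Lebesgue measure at most `2nr`, so
`-log dist(x, γ)` exceeds `t` only on a set of measure `≤ 2n e^{-t}`; the layer-cake formula
then gives `∫ log dist(x, γ) ≥ -(log (2n) + 1)`. Conversely the grid `{i/n : 1 ≤ i ≤ n}` is
within `1/n` of every point of `[0,1]`, so `ê_n ≤ -log n`. Hence `-ê_n = log n + O(1)`,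
and `log n / (-ê_n) → 1`.
-/

open Set Metric Real Topology

lemma volume_setOf_infDist_lt_le {γ : Finset ℝ} (hγ : γ.Nonempty) (r : ℝ) :
    volume {x : ℝ | infDist x γ < r} ≤ ENNReal.ofReal (2 * γ.card * r) := by
  have hcover : {x : ℝ | infDist x γ < r} ⊆ ⋃ p ∈ γ, ball p r := fun x hx => by
    obtain ⟨p, hp, hxp⟩ := (infDist_lt_iff (by exact_mod_cast hγ)).1 hx
    exact mem_biUnion hp hxp
  calc volume {x : ℝ | infDist x γ < r}
      ≤ ∑ p ∈ γ, volume (ball p r) :=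
        (measure_mono hcover).trans (measure_biUnion_finset_le _ _)
    _ = γ.card * ENNReal.ofReal (2 * r) := by simp [Real.volume_ball]
    _ = ENNReal.ofReal (2 * γ.card * r) := by
      rw [← ENNReal.ofReal_natCast, ← ENNReal.ofReal_mul (by positivity)]
      ring_nf

lemma lintegral_le_log_add_one_of_tail_le {α : Type*} [MeasurableSpace α] {μ : Measure α}
    [IsProbabilityMeasure μ] {f : α → ℝ} (hf : AEMeasurable f μ) (hf₀ : 0 ≤ᵐ[μ] f)
    {C : ℝ} (hC : 1 ≤ C)
    (htail : ∀ t, 0 < t → μ {x | t < f x} ≤ ENNReal.ofReal (C * exp (-t))) :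
    ∫⁻ x, ENNReal.ofReal (f x) ∂μ ≤ ENNReal.ofReal (log C + 1) := by
  have hlogC : 0 ≤ log C := log_nonneg hC
  have hbulk : ∫⁻ t in Ioc 0 (log C), μ {x | t < f x} ≤ ENNReal.ofReal (log C) :=
    calc ∫⁻ t in Ioc 0 (log C), μ {x | t < f x} ≤ ∫⁻ _ in Ioc 0 (log C), 1 :=
          lintegral_mono fun _ => prob_le_one
      _ = ENNReal.ofReal (log C) := by simp
  have htail_int : ∫⁻ t in Ioi (log C), μ {x | t < f x} ≤ ENNReal.ofReal 1 :=
    calc ∫⁻ t in Ioi (log C), μ {x | t < f x}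
        ≤ ∫⁻ t in Ioi (log C), ENNReal.ofReal (C * exp (-t)) :=
          setLIntegral_mono' measurableSet_Ioi fun t ht => htail t (hlogC.trans_lt ht)
      _ = ENNReal.ofReal (∫ t in Ioi (log C), C * exp (-t)) :=
          (ofReal_integral_eq_lintegral_ofReal
            ((exp_neg_integrableOn_Ioi _ one_pos).const_mul C |>.congr (by simp))
            (ae_of_all _ fun t => by positivity)).symm
      _ = ENNReal.ofReal 1 := by
          rw [integral_const_mul, integral_exp_neg_Ioi, exp_neg, exp_log (by linarith),
            mul_inv_cancel₀ (by linarith)]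
  rw [lintegral_eq_lintegral_meas_lt μ hf₀ hf, ← Ioc_union_Ioi_eq_Ioi hlogC,
    ENNReal.ofReal_add hlogC zero_le_one]
  exact (lintegral_union_le _ _ _).trans (add_le_add hbulk htail_int)

lemma integrableOn_log_infDist {γ : Finset ℝ} (hγ : γ.Nonempty) (a b : ℝ) :
    IntegrableOn (fun x => log (infDist x γ)) (Icc a b) := by
  have hdom : IntegrableOn (fun x => ∑ p ∈ γ, |log (x - p)|) (Icc a b) := by
    refine integrable_finsetSum _ fun p _ => ?_
    have h :=
      (intervalIntegral.intervalIntegrable_log' (a := a - p) (b := b - p)).comp_sub_right p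
    simp only [sub_add_cancel] at h
    exact (integrableOn_Icc_iff_integrableOn_Ioc).2 h.abs.1
  have hmeas : Measurable fun x : ℝ => log (infDist x γ) :=
    measurable_log.comp (continuous_infDist_pt (γ : Set ℝ)).measurable
  refine hdom.mono' hmeas.aestronglyMeasurable (ae_of_all _ fun x => ?_)
  obtain ⟨p, hp, hxp⟩ :=
    γ.finite_toSet.isCompact.exists_infDist_eq_dist (by exact_mod_cast hγ) x
  rw [norm_eq_abs, hxp, dist_eq, log_abs]
  exact Finset.single_le_sum (f := fun p => |log (x - p)|) (fun _ _ => abs_nonneg _) hp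

lemma neg_log_two_mul_card_add_one_le_integral_log_infDist {μ : Measure ℝ}
    [IsProbabilityMeasure μ] (hμ : μ ≤ volume) {γ : Finset ℝ} (hγ : γ.Nonempty)
    (hint : Integrable (fun x => log (infDist x γ)) μ) :
    -(log (2 * γ.card) + 1) ≤ ∫ x, log (infDist x γ) ∂μ := by
  set f : ℝ → ℝ := fun x => max (-log (infDist x γ)) 0
  have hf : Integrable f μ := hint.neg.pos_part
  have htail : ∀ t, 0 < t → μ {x | t < f x} ≤ ENNReal.ofReal (2 * γ.card * exp (-t)) := by
    intro t ht
    have hsub : {x | t < f x} ⊆ {x | infDist x γ < exp (-t)} := fun x hx => by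
      have hlog : log (infDist x γ) < -t := by
        simp only [f, mem_ofPred_eq, lt_max_iff] at hx
        rcases hx with hx | hx <;> linarith
      have hpos : 0 < infDist x γ :=
        infDist_nonneg.lt_of_ne fun h => by rw [← h, log_zero] at hlog; linarith
      exact (log_lt_iff_lt_exp hpos).1 hlog
    exact (hμ _).trans ((measure_mono hsub).trans (volume_setOf_infDist_lt_le hγ _))
  have hcard : (1 : ℝ) ≤ 2 * γ.card := by
    have : (1 : ℝ) ≤ γ.card := by exact_mod_cast hγ.card_pos
    linarith
  have hlint := lintegral_le_log_add_one_of_tail_le hf.aemeasurable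
    (ae_of_all _ fun _ => le_max_right _ _) hcard htail
  have hfint : ∫ x, f x ∂μ ≤ log (2 * γ.card) + 1 := by
    rw [integral_eq_lintegral_of_nonneg_ae (f := f) (ae_of_all _ fun _ => le_max_right _ _)
      hf.aestronglyMeasurable]
    exact ENNReal.toReal_le_of_le_ofReal (by linarith [log_nonneg hcard]) hlint
  calc -(log (2 * γ.card) + 1) ≤ ∫ x, -f x ∂μ := by rw [integral_neg]; linarith
    _ ≤ ∫ x, log (infDist x γ) ∂μ :=
      integral_mono hf.neg hint fun x => neg_le.2 (le_max_left _ _)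

lemma exists_mem_Icc_abs_sub_div_le {n : ℕ} (hn : 1 ≤ n) {x : ℝ} (hx : x ∈ Icc 0 1) :
    ∃ i ∈ Finset.Icc 1 n, |x - i / n| ≤ 1 / n := by
  have hn' : (0 : ℝ) < n := by exact_mod_cast hn
  have hnx : 0 ≤ n * x := mul_nonneg hn'.le hx.1
  refine ⟨max 1 ⌈n * x⌉₊, Finset.mem_Icc.2 ⟨le_max_left _ _, max_le hn ?_⟩, ?_⟩
  · exact Nat.ceil_le.2 (by nlinarith [hx.2])
  · have hle : n * x ≤ (max 1 ⌈n * x⌉₊ : ℕ) :=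
      (Nat.le_ceil _).trans (by exact_mod_cast le_max_right _ _)
    have hge : ((max 1 ⌈n * x⌉₊ : ℕ) : ℝ) ≤ n * x + 1 := by
      push_cast
      exact max_le (by linarith) (Nat.ceil_lt_add_one hnx).le
    rw [← mul_le_mul_iff_of_pos_left hn', ← abs_of_pos hn', ← abs_mul, abs_of_pos hn',
      mul_sub, mul_div_cancel₀ _ hn'.ne', mul_one_div_cancel hn'.ne', abs_le]
    constructor <;> linarith

lemma exists_finset_card_le_infDist_le {n : ℕ} (hn : 1 ≤ n) :
    ∃ γ : Finset ℝ, γ.Nonempty ∧ γ.card ≤ n ∧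
      ∀ x ∈ Icc (0 : ℝ) 1, infDist x γ ≤ 1 / n := by
  refine ⟨(Finset.Icc 1 n).image fun i : ℕ => (i : ℝ) / n, (Finset.nonempty_Icc.2 hn).image _,
    Finset.card_image_le.trans (by simp), fun x hx => ?_⟩
  obtain ⟨i, hi, hxi⟩ := exists_mem_Icc_abs_sub_div_le hn hx
  calc infDist x _ ≤ dist x (i / n) :=
        infDist_le_dist_of_mem <| by
          simpa using Finset.mem_image_of_mem (fun i : ℕ => (i : ℝ) / n) hi
    _ ≤ 1 / n := hxi

lemma integral_log_infDist_le_of_ae_le {μ : Measure ℝ} [IsProbabilityMeasure μ]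
    [NullSingletonClass μ] {γ : Finset ℝ} (hγ : γ.Nonempty)
    (hint : Integrable (fun x => log (infDist x γ)) μ)
    {r : ℝ} (h : ∀ᵐ x ∂μ, infDist x γ ≤ r) :
    ∫ x, log (infDist x γ) ∂μ ≤ log r := by
  have hpos : ∀ᵐ x ∂μ, 0 < infDist x γ := by
    filter_upwards [measure_eq_zero_iff_ae_notMem.1 (γ.finite_toSet.measure_zero μ)] with x hx
    exact (γ.finite_toSet.isClosed.notMem_iff_infDist_pos (by exact_mod_cast hγ)).1 hx
  calc ∫ x, log (infDist x γ) ∂μ ≤ ∫ _, log r ∂μ :=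
        integral_mono_ae hint (integrable_const _)
          (by filter_upwards [h, hpos] with x hx hx₀ using log_le_log hx₀ hx)
    _ = log r := by simp

lemma le_geomQuantErrExp {μ : Measure ℝ} {n : ℕ} (hn : 1 ≤ n) {c : ℝ}
    (h : ∀ γ : Finset ℝ, γ.Nonempty → γ.card ≤ n →
      c ≤ ∫ x, log (infDist x γ) ∂μ) :
    c ≤ geomQuantErrExp μ n :=
  le_csInf ⟨_, {0}, Finset.singleton_nonempty 0, by simpa using hn, rfl⟩
    fun _ ⟨γ, hγ, hcard, he⟩ => he ▸ h γ hγ hcard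

lemma geomQuantErrExp_le {μ : Measure ℝ} {n : ℕ} {c : ℝ}
    (h : ∀ γ : Finset ℝ, γ.Nonempty → γ.card ≤ n →
      c ≤ ∫ x, log (infDist x γ) ∂μ)
    {γ : Finset ℝ} (hγ : γ.Nonempty) (hcard : γ.card ≤ n) :
    geomQuantErrExp μ n ≤ ∫ x, log (infDist x γ) ∂μ :=
  csInf_le ⟨c, fun _ ⟨γ, hγ, hcard, he⟩ => he ▸ h γ hγ hcard⟩
    ⟨γ, hγ, hcard, rfl⟩

lemma tendsto_log_div_of_le_of_le {u : ℕ → ℝ} {c : ℝ}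
    (h : ∀ᶠ n : ℕ in atTop, log n ≤ u n ∧ u n ≤ log n + c) :
    Tendsto (fun n : ℕ => log n / u n) atTop (𝓝 1) := by
  have hlog : Tendsto (fun n : ℕ => log n) atTop atTop :=
    tendsto_log_atTop.comp tendsto_natCast_atTop_atTop
  have hupper : Tendsto (fun n : ℕ => 1 + c / log n) atTop (𝓝 1) := by
    simpa using tendsto_const_nhds.add (tendsto_const_nhds.div_atTop hlog)
  have hratio : Tendsto (fun n : ℕ => u n / log n) atTop (𝓝 1) := by
    refine tendsto_of_tendsto_of_tendsto_of_le_of_le' tendsto_const_nhds hupper ?_ ?_ <;>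
      filter_upwards [h, hlog.eventually_gt_atTop 0] with n hn hpos
    · exact (one_le_div hpos).2 hn.1
    · rw [one_add_div hpos.ne']
      exact div_le_div_of_nonneg_right hn.2 hpos.le
  simpa using hratio.inv₀ one_ne_zero

lemma log_le_neg_geomQuantErrExp_unitInterval_le {n : ℕ} (hn : 1 ≤ n) :
    log n ≤ -geomQuantErrExp (volume.restrict (Icc (0 : ℝ) 1)) n ∧
      -geomQuantErrExp (volume.restrict (Icc (0 : ℝ) 1)) n ≤ log n + (log 2 + 1) := by
  have : IsProbabilityMeasure (volume.restrict (Icc (0 : ℝ) 1)) := ⟨by simp⟩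
  have hlower : ∀ γ : Finset ℝ, γ.Nonempty → γ.card ≤ n →
      -(log (2 * n) + 1) ≤ ∫ x, log (infDist x γ) ∂volume.restrict (Icc (0 : ℝ) 1) := by
    intro γ hγ hcard
    have hlog : log (2 * γ.card) ≤ log (2 * n) :=
      log_le_log (by simpa using hγ.card_pos) (by gcongr)
    linarith [neg_log_two_mul_card_add_one_le_integral_log_infDist Measure.restrict_le_self hγ
      (integrableOn_log_infDist hγ 0 1)]
  obtain ⟨γ, hγ, hcard, hdist⟩ := exists_finset_card_le_infDist_le hn
  have hupper := (geomQuantErrExp_le hlower hγ hcard).trans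
    (integral_log_infDist_le_of_ae_le hγ (integrableOn_log_infDist hγ 0 1)
      ((ae_restrict_iff' measurableSet_Icc).2 (ae_of_all _ hdist)))
  have hbelow := le_geomQuantErrExp hn hlower
  rw [one_div, log_inv] at hupper
  rw [log_mul two_ne_zero (Nat.cast_pos.2 hn).ne'] at hbelow
  constructor <;> linarith

/-- For Lebesgue measure restricted to `[0,1]`, the quantization dimension with respect
to the geometric mean error exists and equals `1`. -/
theorem quantization_dim_lebesgue_unit_interval :
    lowerQDim (volume.restrict (Set.Icc (0 : ℝ) 1)) =
      upperQDim (volume.restrict (Set.Icc (0 : ℝ) 1)) ∧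
    lowerQDim (volume.restrict (Set.Icc (0 : ℝ) 1)) = 1 := by
  have h := tendsto_log_div_of_le_of_le <|
    (eventually_ge_atTop 1).mono fun _ hn => log_le_neg_geomQuantErrExp_unitInterval_le hn
  have hlower : lowerQDim (volume.restrict (Set.Icc (0 : ℝ) 1)) = 1 := h.liminf_eq
  exact ⟨hlower.trans h.limsup_eq.symm, hlower⟩
end
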